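/- Let {X_n} be i.i.d. random variables such that (log max_{1≤k≤n} X_k)/(log n) →_P 1/ρ for some 0 < ρ < ∞. Then for every 0 < y < 1/ρ, (log(−ln P((log max_{1≤k≤n} X_k)/(log n) ≤ 1/ρ − y)))/(ln n) → ρy as n → ∞. -/

import Mathlib

open MeasureTheory ProbabilityTheory Filter
open scoped ENNReal

/-- `log x = ln (e ∨ x)` as in the paper. -/
noncomputable def Log (x : ℝ) : ℝ := Real.log (max (Real.exp 1) x)

/-- `pmax X n ω = max_{1 ≤ k ≤ n} X_k(ω)` (indexed `0,…,n-1`), junk value at `n = 0`. -/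
noncomputable def pmax {Ω : Type*} (X : ℕ → Ω → ℝ) (n : ℕ) (ω : Ω) : ℝ :=
  if h : n = 0 then X 0 ω
  else (Finset.range n).sup' (Finset.nonempty_range_iff.mpr h) fun k => X k ω

/-! Let `F` be the distribution function of `X 0` and `L = -log F`. By independence,
`P(Log (max_{k<n} X_k) / Log n ≤ γ) = F(n ^ γ) ^ n = exp (-n L(n ^ γ))` for large `n`, so the
quantity in question is `Log (n L(n ^ α)) / log n` with `α = 1/ρ - y`, while convergence in
probability says `n L(n ^ β) → ∞` for `β < 1/ρ` and `n L(n ^ β) → 0` for `β > 1/ρ`. As `L` is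
eventually antitone, evaluating these at `m ≈ n ^ (α / β)`, where `m ^ β ≈ n ^ α`, squeezes
`n L(n ^ α)` between constant multiples of `n ^ (1 - α / β)`; letting `β → 1/ρ` gives the
exponent `1 - ρ α = ρ y`. -/

open Set Real Topology

lemma Log_monotone : Monotone Log := fun _ _ h =>
  log_le_log (lt_max_of_lt_left (exp_pos 1)) (max_le_max_left _ h)

lemma Log_of_exp_one_le {x : ℝ} (hx : exp 1 ≤ x) : Log x = log x := by
  rw [Log, max_eq_right hx]

lemma log_le_Log {x : ℝ} (hx : 0 < x) : log x ≤ Log x :=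
  log_le_log hx (le_max_right _ _)

lemma Log_le_iff {x c : ℝ} (hc : 1 ≤ c) : Log x ≤ c ↔ x ≤ exp c := by
  rw [Log, log_le_iff_le_exp (lt_max_of_lt_left (exp_pos 1)), max_le_iff,
    and_iff_right (exp_le_exp.mpr hc)]

lemma Log_natCast {n : ℕ} (hn : 3 ≤ n) : Log n = log n :=
  Log_of_exp_one_le <| calc exp 1 ≤ 3 := (exp_one_lt_d9.trans (by norm_num)).le
    _ ≤ n := by exact_mod_cast hn

lemma Log_div_Log_natCast_le_iff {n : ℕ} (hn : 3 ≤ n) {γ : ℝ} (hγ : 1 ≤ γ * log n) (x : ℝ) :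
    Log x / Log n ≤ γ ↔ x ≤ (n : ℝ) ^ γ := by
  have hlog : 0 < log n := log_pos (by exact_mod_cast (by omega : 1 < n))
  rw [Log_natCast hn, div_le_iff₀ hlog, Log_le_iff hγ,
    rpow_def_of_pos (by exact_mod_cast (by omega : 0 < n)), mul_comm]

lemma tendsto_natCast_rpow_atTop {θ : ℝ} (hθ : 0 < θ) :
    Tendsto (fun n : ℕ => (n : ℝ) ^ θ) atTop atTop :=
  (tendsto_rpow_atTop hθ).comp tendsto_natCast_atTop_atTop

section Substitution

variable {L : ℝ → ℝ} {t₀ α β : ℝ}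

/-- Evaluating the hypothesis at `m = ⌈n ^ (α / β)⌉` transfers it from the exponent `β` to `α`. -/
lemma eventually_rpow_le_mul_of_eventually_two_le (hL : AntitoneOn L (Ici t₀))
    (hα : 0 < α) (hαβ : α < β) (h : ∀ᶠ n : ℕ in atTop, 2 ≤ n * L (n ^ β)) :
    ∀ᶠ n : ℕ in atTop, (n : ℝ) ^ (1 - α / β) ≤ n * L (n ^ α) := by
  have hβ : 0 < β := hα.trans hαβ
  set θ := α / β
  have hθ : 0 < θ := div_pos hα hβ
  have hm := (tendsto_nat_ceil_atTop.comp (tendsto_natCast_rpow_atTop hθ)).eventually h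
  filter_upwards [hm, (tendsto_natCast_rpow_atTop hα).eventually_ge_atTop t₀,
    (tendsto_natCast_rpow_atTop hθ).eventually_ge_atTop 1, eventually_gt_atTop 0]
    with n hm hαt₀ hθ1 hn
  simp only [Function.comp_apply] at hm
  have hn : (0 : ℝ) < n := by exact_mod_cast hn
  set m := ⌈(n : ℝ) ^ θ⌉₊
  have hm_le : (m : ℝ) ≤ 2 * (n : ℝ) ^ θ := by
    linarith [Nat.ceil_lt_add_one (zero_le_one.trans hθ1)]
  have hαm : (n : ℝ) ^ α ≤ (m : ℝ) ^ β := by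
    rw [← div_mul_cancel₀ α hβ.ne', rpow_mul hn.le]
    exact rpow_le_rpow (by positivity) (Nat.le_ceil _) hβ.le
  have hLm : L ((m : ℝ) ^ β) ≤ L ((n : ℝ) ^ α) := hL hαt₀ (hαt₀.trans hαm) hαm
  have hinv : ((n : ℝ) ^ θ)⁻¹ ≤ L ((m : ℝ) ^ β) := by
    have hLpos : 0 < L ((m : ℝ) ^ β) := pos_of_mul_pos_right (by linarith) (Nat.cast_nonneg m)
    rw [inv_le_iff_one_le_mul₀ (by positivity)]
    nlinarith
  calc (n : ℝ) ^ (1 - θ) = n * ((n : ℝ) ^ θ)⁻¹ := by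
        rw [rpow_sub hn, rpow_one, div_eq_mul_inv]
    _ ≤ n * L (n ^ α) := mul_le_mul_of_nonneg_left (hinv.trans hLm) hn.le

/-- Evaluating the hypothesis at `m = ⌊n ^ (α / β)⌋` transfers it from the exponent `β` to `α`. -/
lemma eventually_mul_le_two_mul_rpow_of_eventually_le_one (hL : AntitoneOn L (Ici t₀))
    (hα : 0 < α) (hαβ : α < β) (h : ∀ᶠ n : ℕ in atTop, n * L (n ^ β) ≤ 1) :
    ∀ᶠ n : ℕ in atTop, n * L (n ^ α) ≤ 2 * (n : ℝ) ^ (1 - α / β) := by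
  have hβ : 0 < β := hα.trans hαβ
  set θ := α / β
  have hθ : 0 < θ := div_pos hα hβ
  have hm_top := tendsto_nat_floor_atTop.comp (tendsto_natCast_rpow_atTop hθ)
  have hmβ := (tendsto_rpow_atTop hβ).comp (tendsto_natCast_atTop_atTop.comp hm_top)
  filter_upwards [hm_top.eventually h, hmβ.eventually_ge_atTop t₀,
    (tendsto_natCast_rpow_atTop hθ).eventually_ge_atTop 2, eventually_gt_atTop 0]
    with n hm hmt₀ hθ2 hn
  simp only [Function.comp_apply] at hm hmt₀
  have hn : (0 : ℝ) < n := by exact_mod_cast hn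
  set m := ⌊(n : ℝ) ^ θ⌋₊
  have hm_ge : (n : ℝ) ^ θ ≤ 2 * m := by linarith [Nat.sub_one_lt_floor ((n : ℝ) ^ θ)]
  have hm : (0 : ℝ) < m := by linarith
  have hmα : (m : ℝ) ^ β ≤ (n : ℝ) ^ α := by
    rw [← div_mul_cancel₀ α hβ.ne', rpow_mul hn.le]
    exact rpow_le_rpow hm.le (Nat.floor_le (by positivity)) hβ.le
  have hLm : L ((n : ℝ) ^ α) ≤ L ((m : ℝ) ^ β) := hL hmt₀ (hmt₀.trans hmα) hmα
  have hbound : L ((m : ℝ) ^ β) ≤ 2 * ((n : ℝ) ^ θ)⁻¹ := by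
    rw [← div_eq_mul_inv, le_div_iff₀ (by positivity)]
    nlinarith
  calc (n : ℝ) * L (n ^ α) ≤ n * (2 * ((n : ℝ) ^ θ)⁻¹) :=
        mul_le_mul_of_nonneg_left (hLm.trans hbound) hn.le
    _ = 2 * (n : ℝ) ^ (1 - θ) := by
        rw [rpow_sub hn, rpow_one, div_eq_mul_inv]; ring

lemma tendsto_Log_mul_div_log (hL : AntitoneOn L (Ici t₀)) {a : ℝ} (hα : 0 < α) (hαa : α < a)
    (hbelow : ∀ β ∈ Ioo α a, ∀ᶠ n : ℕ in atTop, 2 ≤ n * L (n ^ β))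
    (habove : ∀ β, a < β → ∀ᶠ n : ℕ in atTop, n * L (n ^ β) ≤ 1) :
    Tendsto (fun n : ℕ => Log (n * L (n ^ α)) / log n) atTop (𝓝 (1 - α / a)) := by
  have hcont : ContinuousAt (fun β => 1 - α / β) a :=
    continuousAt_const.sub (continuousAt_const.div continuousAt_id (hα.trans hαa).ne')
  refine tendsto_order.2 ⟨fun c hc => ?_, fun c hc => ?_⟩
  · obtain ⟨β, ⟨hαβ, hβa⟩, hcβ⟩ : ∃ β ∈ Ioo α a, c < 1 - α / β :=
      (Eventually.and (Ioo_mem_nhdsLT hαa)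
        ((hcont.tendsto.mono_left nhdsWithin_le_nhds).eventually (lt_mem_nhds hc))).exists
    filter_upwards [eventually_rpow_le_mul_of_eventually_two_le hL hα hαβ (hbelow β ⟨hαβ, hβa⟩),
      eventually_gt_atTop 1] with n hn hn1
    have hn1 : (1 : ℝ) < n := by exact_mod_cast hn1
    rw [lt_div_iff₀ (log_pos hn1)]
    calc c * log n < (1 - α / β) * log n := by gcongr; exact log_pos hn1
      _ = log ((n : ℝ) ^ (1 - α / β)) := (log_rpow (by linarith) _).symm
      _ ≤ log (n * L (n ^ α)) := log_le_log (by positivity) hn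
      _ ≤ Log (n * L (n ^ α)) := log_le_Log ((by positivity : (0 : ℝ) < _).trans_le hn)
  · obtain ⟨β, hβa, hcβ⟩ : ∃ β, a < β ∧ 1 - α / β < c :=
      (Eventually.and (self_mem_nhdsWithin : Ioi a ∈ 𝓝[>] a)
        ((hcont.tendsto.mono_left nhdsWithin_le_nhds).eventually (gt_mem_nhds hc))).exists
    have hαβ : α < β := hαa.trans hβa
    obtain ⟨γ, hβγ, hγc⟩ := exists_between hcβ
    have hγ : 0 < γ := (sub_pos.2 ((div_lt_one (hα.trans hαβ)).2 hαβ)).trans hβγ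
    filter_upwards [eventually_mul_le_two_mul_rpow_of_eventually_le_one hL hα hαβ
        (habove β hβa), (tendsto_natCast_rpow_atTop (sub_pos.2 hβγ)).eventually_ge_atTop 2,
      (tendsto_natCast_rpow_atTop hγ).eventually_ge_atTop (exp 1), eventually_gt_atTop 1]
      with n hn h2 he hn1
    have hn1 : (1 : ℝ) < n := by exact_mod_cast hn1
    rw [div_lt_iff₀ (log_pos hn1)]
    calc Log (n * L (n ^ α)) ≤ Log ((n : ℝ) ^ γ) := Log_monotone <| calc
          (n : ℝ) * L (n ^ α) ≤ 2 * (n : ℝ) ^ (1 - α / β) := hn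
          _ ≤ (n : ℝ) ^ (γ - (1 - α / β)) * (n : ℝ) ^ (1 - α / β) := by gcongr
          _ = (n : ℝ) ^ γ := by rw [← rpow_add (by linarith)]; ring_nf
      _ = γ * log n := by rw [Log_of_exp_one_le he, log_rpow (by linarith)]
      _ < c * log n := by gcongr; exact log_pos hn1

end Substitution

lemma tendsto_Log_neg_log_pow_div_log {G : ℝ → ℝ} (hG : Monotone G) (hG0 : ∀ t, 0 ≤ G t)
    {a α : ℝ} (hα : 0 < α) (hαa : α < a)
    (hbelow : ∀ β ∈ Ioo α a, Tendsto (fun n : ℕ => G (n ^ β) ^ n) atTop (𝓝 0))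
    (habove : ∀ β, a < β → Tendsto (fun n : ℕ => G (n ^ β) ^ n) atTop (𝓝 1)) :
    Tendsto (fun n : ℕ => Log (-log (G (n ^ α) ^ n)) / log n) atTop (𝓝 (1 - α / a)) := by
  have habove' (β : ℝ) (hβ : a < β) : ∀ᶠ n : ℕ in atTop, exp (-1) < G (n ^ β) ^ n :=
    (habove β hβ).eventually (lt_mem_nhds (exp_lt_one_iff.2 neg_one_lt_zero))
  obtain ⟨t₀, ht₀⟩ : ∃ t₀, 0 < G t₀ := by
    obtain ⟨n, hn, hn0⟩ := ((habove' (a + 1) (by linarith)).and (eventually_ne_atTop 0)).exists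
    refine ⟨(n : ℝ) ^ (a + 1), (hG0 _).lt_of_ne' fun h => ?_⟩
    rw [h, zero_pow hn0] at hn
    exact (exp_pos _).not_gt hn
  set L := fun t => -log (G t)
  have hL : AntitoneOn L (Ici t₀) := fun s hs t _ hst =>
    neg_le_neg (log_le_log (ht₀.trans_le (hG hs)) (hG hst))
  have hpow (n : ℕ) (γ : ℝ) : -log (G (n ^ γ) ^ n) = n * L (n ^ γ) := by
    rw [log_pow]; ring
  simp_rw [hpow]
  refine tendsto_Log_mul_div_log hL hα hαa (fun β hβ => ?_) fun β hβ => ?_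
  · filter_upwards [(hbelow β hβ).eventually (gt_mem_nhds (exp_pos (-2))),
      (tendsto_natCast_rpow_atTop (hα.trans hβ.1)).eventually_ge_atTop t₀] with n hn ht
    rw [← hpow, le_neg, log_le_iff_le_exp (pow_pos (ht₀.trans_le (hG ht)) n)]
    exact hn.le
  · filter_upwards [habove' β hβ] with n hn
    rw [← hpow, neg_le, le_log_iff_exp_le ((exp_pos _).trans hn)]
    exact hn.le

section Probability

variable {Ω : Type*} [MeasurableSpace Ω] {μ : Measure Ω}

lemma measure_pmax_le_eq_pow {X : ℕ → Ω → ℝ} (hindep : iIndepFun X μ)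
    (hident : ∀ n, IdentDistrib (X n) (X 0) μ μ) {n : ℕ} (hn : n ≠ 0) (t : ℝ) :
    μ {ω | pmax X n ω ≤ t} = μ {ω | X 0 ω ≤ t} ^ n := by
  have hset : {ω | pmax X n ω ≤ t} = ⋂ k ∈ Finset.range n, X k ⁻¹' Iic t := by
    ext ω
    simp [pmax, hn, Finset.sup'_le_iff]
  rw [hset, hindep.meas_biInter fun k _ => ⟨Iic t, measurableSet_Iic, rfl⟩,
    Finset.prod_congr rfl fun k _ => (hident k).measure_mem_eq measurableSet_Iic,
    Finset.prod_const, Finset.card_range]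
  rfl

lemma eventually_measure_Log_pmax_div_le_eq_pow {X : ℕ → Ω → ℝ} (hindep : iIndepFun X μ)
    (hident : ∀ n, IdentDistrib (X n) (X 0) μ μ) {γ : ℝ} (hγ : 0 < γ) :
    ∀ᶠ n : ℕ in atTop, μ {ω | Log (pmax X n ω) / Log n ≤ γ} = μ {ω | X 0 ω ≤ n ^ γ} ^ n := by
  have hlog := (tendsto_log_atTop.comp tendsto_natCast_atTop_atTop).const_mul_atTop hγ
  filter_upwards [hlog.eventually_ge_atTop 1, eventually_ge_atTop 3] with n hγn hn
  simp_rw [Log_div_Log_natCast_le_iff hn hγn]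
  exact measure_pmax_le_eq_pow hindep hident (by omega) _

variable {ι : Type*} {l : Filter ι} {Z : ι → Ω → ℝ} {b c : ℝ}

lemma tendsto_measure_le_of_lt
    (h : ∀ ε, 0 < ε → Tendsto (fun i => μ {ω | ε ≤ |Z i ω - c|}) l (𝓝 0)) (hb : b < c) :
    Tendsto (fun i => μ {ω | Z i ω ≤ b}) l (𝓝 0) :=
  tendsto_of_tendsto_of_tendsto_of_le_of_le tendsto_const_nhds (h (c - b) (sub_pos.2 hb))
    (fun _ => zero_le) fun i => measure_mono fun ω (hω : Z i ω ≤ b) =>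
      (by linarith : c - b ≤ c - Z i ω).trans ((le_abs_self _).trans_eq (abs_sub_comm _ _))

lemma tendsto_measure_le_of_gt [IsProbabilityMeasure μ]
    (h : ∀ ε, 0 < ε → Tendsto (fun i => μ {ω | ε ≤ |Z i ω - c|}) l (𝓝 0)) (hb : c < b) :
    Tendsto (fun i => μ {ω | Z i ω ≤ b}) l (𝓝 1) := by
  have hcover (i : ι) : 1 - μ {ω | b - c ≤ |Z i ω - c|} ≤ μ {ω | Z i ω ≤ b} := by
    rw [tsub_le_iff_right, ← measure_univ (μ := μ)]
    refine (measure_mono fun ω _ => ?_).trans (measure_union_le _ _)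
    by_cases hω : Z i ω ≤ b
    · exact Or.inl hω
    · exact Or.inr ((by linarith : b - c ≤ Z i ω - c).trans (le_abs_self _))
  have hlow := ENNReal.Tendsto.sub tendsto_const_nhds (h (b - c) (sub_pos.2 hb))
    (Or.inl ENNReal.one_ne_top)
  rw [tsub_zero] at hlow
  exact tendsto_of_tendsto_of_tendsto_of_le_of_le hlow tendsto_const_nhds hcover
    fun _ => prob_le_one

end Probability

theorem stmt12_general {Ω : Type*} [MeasurableSpace Ω] (μ : Measure Ω) [IsProbabilityMeasure μ]
    (X : ℕ → Ω → ℝ)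
    (hindep : iIndepFun X μ)
    (hident : ∀ n, IdentDistrib (X n) (X 0) μ μ)
    (ρ : ℝ) (hρ : 0 < ρ)
    (hconv : ∀ ε : ℝ, 0 < ε →
        Tendsto (fun n : ℕ => μ {ω | ε ≤ |Log (pmax X n ω) / Log n - 1 / ρ|}) atTop (nhds 0)) :
    ∀ y : ℝ, 0 < y → y < 1 / ρ →
      Tendsto (fun n : ℕ =>
          Log (-Real.log ((μ {ω | Log (pmax X n ω) / Log n ≤ 1 / ρ - y}).toReal)) / Real.log n)
        atTop (nhds (ρ * y)) := by
  intro y hy hyρ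
  set G : ℝ → ℝ := fun t => (μ {ω | X 0 ω ≤ t}).toReal
  have hG : Monotone G := fun s t hst =>
    ENNReal.toReal_mono (measure_ne_top _ _) (measure_mono fun ω (hω : X 0 ω ≤ s) => hω.trans hst)
  have hmax_eq {γ : ℝ} (hγ : 0 < γ) : (fun n : ℕ => (μ {ω | Log (pmax X n ω) / Log n ≤ γ}).toReal)
      =ᶠ[atTop] fun n => G (n ^ γ) ^ n := by
    filter_upwards [eventually_measure_Log_pmax_div_le_eq_pow hindep hident hγ] with n hn
    rw [hn, ENNReal.toReal_pow]
  have hG_pow {β : ℝ} (hβ : 0 < β) {p : ℝ≥0∞} (hp : p ≠ ∞)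
      (h : Tendsto (fun n : ℕ => μ {ω | Log (pmax X n ω) / Log n ≤ β}) atTop (𝓝 p)) :
      Tendsto (fun n : ℕ => G (n ^ β) ^ n) atTop (𝓝 p.toReal) :=
    ((ENNReal.tendsto_toReal hp).comp h).congr' (hmax_eq hβ)
  have key := tendsto_Log_neg_log_pow_div_log hG (fun _ => ENNReal.toReal_nonneg)
    (sub_pos.2 hyρ) (sub_lt_self _ hy)
    (fun β hβ => hG_pow ((sub_pos.2 hyρ).trans hβ.1) ENNReal.zero_ne_top
      (tendsto_measure_le_of_lt hconv hβ.2))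
    fun β hβ => hG_pow ((one_div_pos.2 hρ).trans hβ) ENNReal.one_ne_top
      (tendsto_measure_le_of_gt hconv hβ)
  rw [show 1 - (1 / ρ - y) / (1 / ρ) = ρ * y by field_simp; ring] at key
  exact key.congr' (by filter_upwards [hmax_eq (sub_pos.2 hyρ)] with n hn; rw [hn])

theorem stmt12 {Ω : Type*} [MeasurableSpace Ω] (μ : Measure Ω) [IsProbabilityMeasure μ]
    (X : ℕ → Ω → ℝ) (hmeas : ∀ n, Measurable (X n))
    (hindep : iIndepFun X μ)
    (hident : ∀ n, IdentDistrib (X n) (X 0) μ μ)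
    (ρ : ℝ) (hρ : 0 < ρ)
    (hconv : ∀ ε : ℝ, 0 < ε →
        Tendsto (fun n : ℕ => μ {ω | ε ≤ |Log (pmax X n ω) / Log n - 1 / ρ|}) atTop (nhds 0)) :
    ∀ y : ℝ, 0 < y → y < 1 / ρ →
      Tendsto (fun n : ℕ =>
          Log (-Real.log ((μ {ω | Log (pmax X n ω) / Log n ≤ 1 / ρ - y}).toReal)) / Real.log n)
        atTop (nhds (ρ * y)) :=
  stmt12_general μ X hindep hident ρ hρ hconv
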